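/- arXiv:2308.12237 — 3 statements merged into one kernel-verified Lean document; each statement's English description precedes it below -/
import Mathlib

section
/- Let G be a topological group, K a compact subgroup of G, and S a K-space. Write P = G ×_K S for the twisted product, let [g,s]_G denote the G-orbit of [g,s] in the G-space P and [g,s]_K the K-orbit of [g,s] under the restricted K-action. Then: (i) the map ι : P/G → P/K given by ι([g,s]_G) = [e,s]_K (where e is the identity of G) is well defined and continuous; (ii) the map r : P/K → P/G given by r([g,s]_K) = [g,s]_G is well defined and continuous; (iii) r ∘ ι = id on P/G. Consequently, ι is a topological embedding and P/G is homeomorphic to a retract of P/K. -/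
universe u v

section TwistedProduct

variable (G : Type u) [Group G] [TopologicalSpace G] (K : Subgroup G)
  (S : Type v) [TopologicalSpace S] [MulAction K S]

/-- The orbit equivalence relation of the `K`-action `k • (g, s) = (g * k⁻¹, k • s)`
on `G × S`. -/
def twistSetoid : Setoid (G × S) where
  r p q := ∃ k : K, q.1 = p.1 * (k : G)⁻¹ ∧ q.2 = k • p.2
  iseqv := by
    refine ⟨fun p => ⟨1, by simp⟩, ?_, ?_⟩
    · rintro p q ⟨k, h1, h2⟩
      exact ⟨k⁻¹, by simp [h1, mul_assoc], by simp [h2]⟩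
    · rintro p q r ⟨k, h1, h2⟩ ⟨l, h3, h4⟩
      exact ⟨l * k, by simp [h3, h1, mul_assoc], by simp [h4, h2, mul_smul]⟩

/-- The twisted product `G ×_K S`: the orbit space of the `K`-action
`k • (g, s) = (g * k⁻¹, k • s)` on `G × S`, with the quotient topology. -/
def TwistedProd : Type (max u v) := Quotient (twistSetoid G K S)

instance : TopologicalSpace (TwistedProd G K S) := instTopologicalSpaceQuotient

/-- `[g, s]`, the `K`-orbit of `(g, s)` in the twisted product `G ×_K S`. -/
def TwistedProd.mk (g : G) (s : S) : TwistedProd G K S :=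
  Quotient.mk (twistSetoid G K S) (g, s)

/-- The natural `G`-action on `G ×_K S`, given by `g' • [g, s] = [g' * g, s]`. -/
instance TwistedProd.instMulAction : MulAction G (TwistedProd G K S) where
  smul g' := Quotient.map (fun p => (g' * p.1, p.2))
    (by rintro p q ⟨k, h1, h2⟩; exact ⟨k, by simp [h1, mul_assoc], h2⟩)
  one_smul x := Quotient.inductionOn x fun p => by
    show Quotient.mk _ (1 * p.1, p.2) = Quotient.mk _ p
    simp
  mul_smul g₁ g₂ x := Quotient.inductionOn x fun p => by
    show Quotient.mk _ (g₁ * g₂ * p.1, p.2) = Quotient.mk _ (g₁ * (g₂ * p.1), p.2)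
    rw [mul_assoc]

end TwistedProduct

/-!
Since `[g, s] = g • [1, s]`, every `G`-orbit of `P = G ×_K S` meets the slice `{[1, s]}`, and
`k • [1, s] = [1, k • s]` for `k ∈ K`. Hence `[g, s]_G ↦ [1, s]_K` is well defined, continuous by
the universal property of the quotient topologies, and a section of the projection `P/K → P/G`.
A continuous map with a continuous left inverse is an embedding onto a retract.
-/

open Topology Function Set

theorem exists_retract_homeomorph_of_leftInverse {X Y : Type*} [TopologicalSpace X]
    [TopologicalSpace Y] {ι : X → Y} {r : Y → X} (hι : Continuous ι) (hr : Continuous r)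
    (h : LeftInverse r ι) :
    ∃ A : Set Y, (∃ ρ : Y → A, Continuous ρ ∧ ∀ a : A, ρ a = a) ∧ Nonempty (X ≃ₜ A) := by
  refine ⟨range ι, ⟨fun y => ⟨ι (r y), mem_range_self _⟩, (hι.comp hr).subtype_mk _, ?_⟩,
    ⟨(h.isEmbedding hr hι).toHomeomorph⟩⟩
  rintro ⟨_, x, rfl⟩
  exact Subtype.ext (congrArg ι (h x))

namespace MulAction

variable {G α : Type*} [Group G] [MulAction G α] (K : Subgroup G)

def orbitQuotientMapOfSubgroup : Quotient (orbitRel K α) → Quotient (orbitRel G α) :=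
  Quotient.map' id (orbitRel_subgroup_le K)

theorem continuous_orbitQuotientMapOfSubgroup [TopologicalSpace α] :
    Continuous (orbitQuotientMapOfSubgroup (α := α) K) :=
  continuous_id.quotient_map' _

end MulAction

namespace TwistedProd

variable {G : Type u} [Group G] {K : Subgroup G} {S : Type v} [MulAction K S]

theorem smul_mk (g' g : G) (s : S) : g' • mk G K S g s = mk G K S (g' * g) s := rfl

theorem mk_mul_coe (g : G) (k : K) (s : S) : mk G K S (g * k) s = mk G K S g (k • s) :=
  Quotient.sound ⟨k, by simp, rfl⟩

theorem coe_smul_mk_one (k : K) (s : S) : (k : G) • mk G K S 1 s = mk G K S 1 (k • s) := by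
  rw [smul_mk, ← mk_mul_coe, one_mul, mul_one]

@[elab_as_elim]
theorem induction_on {motive : TwistedProd G K S → Prop} (x : TwistedProd G K S)
    (mk : ∀ g s, motive (mk G K S g s)) : motive x :=
  Quotient.inductionOn x fun p => mk p.1 p.2

variable (G K S) in
def sliceOrbit : TwistedProd G K S → Quotient (MulAction.orbitRel K (TwistedProd G K S)) :=
  Quotient.lift (fun p => Quotient.mk _ (mk G K S 1 p.2)) <| by
    rintro ⟨g, s⟩ ⟨_, _⟩ ⟨k, -, rfl⟩
    exact Eq.symm <| Quotient.sound ⟨k, coe_smul_mk_one k s⟩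

theorem continuous_sliceOrbit [TopologicalSpace G] [TopologicalSpace S] :
    Continuous (sliceOrbit G K S) := by
  refine Continuous.quotient_lift ?_ _
  exact continuous_quotient_mk'.comp <| continuous_quotient_mk'.comp <|
    continuous_const.prodMk continuous_snd

theorem sliceOrbit_smul (g : G) (x : TwistedProd G K S) :
    sliceOrbit G K S (g • x) = sliceOrbit G K S x :=
  induction_on x fun _ _ => rfl

variable (G K S) in
def orbitQuotientSection :
    Quotient (MulAction.orbitRel G (TwistedProd G K S)) →
      Quotient (MulAction.orbitRel K (TwistedProd G K S)) :=
  Quotient.lift (sliceOrbit G K S) <| by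
    rintro _ x ⟨g, rfl⟩
    exact sliceOrbit_smul g x

theorem continuous_orbitQuotientSection [TopologicalSpace G] [TopologicalSpace S] :
    Continuous (orbitQuotientSection G K S) :=
  continuous_sliceOrbit.quotient_lift _

theorem leftInverse_orbitQuotientSection :
    LeftInverse (MulAction.orbitQuotientMapOfSubgroup K) (orbitQuotientSection G K S) := by
  intro x
  induction x using Quotient.inductionOn with
  | h x =>
    induction x using induction_on with
    | mk g s =>
      refine Quotient.sound ⟨g⁻¹, ?_⟩
      change g⁻¹ • mk G K S g s = mk G K S 1 s
      rw [smul_mk, inv_mul_cancel]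

end TwistedProd

theorem orbitSpace_twistedProd_retract_general (G : Type u) [Group G] [TopologicalSpace G]
    (K : Subgroup G)
    (S : Type u) [TopologicalSpace S] [MulAction K S] :
    ∃ (ι : Quotient (MulAction.orbitRel G (TwistedProd G K S)) →
           Quotient (MulAction.orbitRel K (TwistedProd G K S)))
      (r : Quotient (MulAction.orbitRel K (TwistedProd G K S)) →
           Quotient (MulAction.orbitRel G (TwistedProd G K S))),
      (∀ (g : G) (s : S), ι (Quotient.mk _ (TwistedProd.mk G K S g s)) =
          Quotient.mk _ (TwistedProd.mk G K S 1 s)) ∧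
      Continuous ι ∧
      (∀ (g : G) (s : S), r (Quotient.mk _ (TwistedProd.mk G K S g s)) =
          Quotient.mk _ (TwistedProd.mk G K S g s)) ∧
      Continuous r ∧
      r ∘ ι = id ∧
      IsEmbedding ι ∧
      ∃ A : Set (Quotient (MulAction.orbitRel K (TwistedProd G K S))),
        (∃ ρ : Quotient (MulAction.orbitRel K (TwistedProd G K S)) → A,
            Continuous ρ ∧ ∀ a : A, ρ (a : Quotient (MulAction.orbitRel K (TwistedProd G K S))) = a) ∧
        Nonempty (Quotient (MulAction.orbitRel G (TwistedProd G K S)) ≃ₜ A) := by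
  have hι := TwistedProd.continuous_orbitQuotientSection (G := G) (K := K) (S := S)
  have hr := MulAction.continuous_orbitQuotientMapOfSubgroup (α := TwistedProd G K S) K
  have hinv := TwistedProd.leftInverse_orbitQuotientSection (G := G) (K := K) (S := S)
  exact ⟨_, _, fun _ _ => rfl, hι, fun _ _ => rfl, hr, hinv.comp_eq_id,
    hinv.isEmbedding hr hι, exists_retract_homeomorph_of_leftInverse hι hr hinv⟩

/-- For a topological group `G`, a compact subgroup `K ≤ G` and a `K`-space `S`, the map
`ι : (G ×_K S)/G → (G ×_K S)/K`, `[g,s]_G ↦ [e,s]_K`, is well defined and continuous; the map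
`r : (G ×_K S)/K → (G ×_K S)/G`, `[g,s]_K ↦ [g,s]_G`, is well defined and continuous;
`r ∘ ι = id`.  Consequently `ι` is an embedding and `(G ×_K S)/G` is homeomorphic to a retract
of `(G ×_K S)/K`. -/
theorem orbitSpace_twistedProd_retract (G : Type u) [Group G] [TopologicalSpace G]
    [IsTopologicalGroup G] (K : Subgroup G) (hK : IsCompact (K : Set G))
    (S : Type u) [TopologicalSpace S] [MulAction K S] [ContinuousSMul K S] :
    ∃ (ι : Quotient (MulAction.orbitRel G (TwistedProd G K S)) →
           Quotient (MulAction.orbitRel K (TwistedProd G K S)))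
      (r : Quotient (MulAction.orbitRel K (TwistedProd G K S)) →
           Quotient (MulAction.orbitRel G (TwistedProd G K S))),
      (∀ (g : G) (s : S), ι (Quotient.mk _ (TwistedProd.mk G K S g s)) =
          Quotient.mk _ (TwistedProd.mk G K S 1 s)) ∧
      Continuous ι ∧
      (∀ (g : G) (s : S), r (Quotient.mk _ (TwistedProd.mk G K S g s)) =
          Quotient.mk _ (TwistedProd.mk G K S g s)) ∧
      Continuous r ∧
      r ∘ ι = id ∧
      IsEmbedding ι ∧
      ∃ A : Set (Quotient (MulAction.orbitRel K (TwistedProd G K S))),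
        (∃ ρ : Quotient (MulAction.orbitRel K (TwistedProd G K S)) → A,
            Continuous ρ ∧ ∀ a : A, ρ (a : Quotient (MulAction.orbitRel K (TwistedProd G K S))) = a) ∧
        Nonempty (Quotient (MulAction.orbitRel G (TwistedProd G K S)) ≃ₜ A) :=
  orbitSpace_twistedProd_retract_general G K S
end

section
/- Let G be a locally compact Hausdorff topological group, H a compact subgroup of G, X a proper G-space (in Palais's sense), and S a global H-slice of X. Then the map ξ : G ×_H S → X defined by ξ([g,s]) = gs is a G-equivariant homeomorphism. -/
open Pointwise

universe u

/-- Two subsets `U, V` of a `G`-space are *thin relative to each other* if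
`{g : G | gU ∩ V ≠ ∅}` has compact closure in `G`. -/
def ThinPair (G : Type u) [Group G] [TopologicalSpace G] {X : Type u} [TopologicalSpace X]
    [MulAction G X] (U V : Set X) : Prop :=
  IsCompact (closure {g : G | (g • U) ∩ V ≠ ∅})

/-- A subset `U` of a `G`-space is *small* if every point has a neighborhood thin relative
to `U`. -/
def IsSmallSubset (G : Type u) [Group G] [TopologicalSpace G] {X : Type u} [TopologicalSpace X]
    [MulAction G X] (U : Set X) : Prop :=
  ∀ x : X, ∃ V ∈ nhds x, ThinPair G V U

/-- A `G`-space is *proper in the sense of Palais* if every point has a small neighborhood. -/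
def PalaisProper (G : Type u) [Group G] [TopologicalSpace G] (X : Type u) [TopologicalSpace X]
    [MulAction G X] : Prop :=
  ∀ x : X, ∃ U ∈ nhds x, IsSmallSubset G U

universe v

/-! The inverse of `[g, s] ↦ g • s` is `y ↦ [g, g⁻¹ • y]` for any `g` with `gH = f y`; the
coset is forced since `f (g • s) = gH` for `s ∈ S`, which also gives injectivity. The map
`G → G ⧸ H` need not have continuous local sections, so instead of choosing `g` we pass to
the pullback `P = {(g, y) | gH = f y}`: on `P` the formula `(g, y) ↦ [g, g⁻¹ • y]` is
continuous, and the projection `P → X` is an open surjection (as `G → G ⧸ H` is one), hence a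
quotient map, so the inverse is continuous on `X`. -/

open Topology Function

theorem Function.Pullback.snd_surjective {A B C : Type*} {π : A → C} {f : B → C}
    (hπ : Surjective π) : Surjective (Pullback.snd : π.Pullback f → B) := fun b => by
  obtain ⟨a, ha⟩ := hπ (f b)
  exact ⟨⟨(a, b), ha⟩, rfl⟩

theorem IsOpenMap.pullback_snd {A B C : Type*} [TopologicalSpace A] [TopologicalSpace B]
    [TopologicalSpace C] {π : A → C} {f : B → C} (hπ : IsOpenMap π) (hf : Continuous f) :
    IsOpenMap (Pullback.snd : π.Pullback f → B) := by
  refine isOpenMap_iff_nhds_le.mpr fun p U hU => ?_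
  obtain ⟨V, hV, hVU⟩ := (mem_nhds_subtype _ p _).mp hU
  obtain ⟨Va, hVa, Vb, hVb, hbox⟩ := mem_nhds_prod_iff.mp hV
  have himage : π '' Va ∈ 𝓝 (f p.snd) := p.2 ▸ hπ.image_mem_nhds hVa
  filter_upwards [hVb, hf.continuousAt himage] with b hb ⟨a, ha, hab⟩
  exact hVU (a := ⟨(a, b), hab⟩) (hbox ⟨ha, hb⟩)

namespace TwistedProd

variable {G : Type u} [Group G] {K : Subgroup G} {S : Type v} [MulAction K S]

theorem mk_eq_mk_mul_inv_smul (g : G) (k : K) (s : S) :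
    mk G K S g s = mk G K S (g * (k : G)⁻¹) (k • s) :=
  Quotient.sound ⟨k, rfl, rfl⟩

theorem continuous_mk [TopologicalSpace G] [TopologicalSpace S] :
    Continuous fun p : G × S => mk G K S p.1 p.2 :=
  continuous_quot_mk

section ActionMap

variable {X : Type*} [MulAction G X] (S : SubMulAction K X)

def actionMap : TwistedProd G K S → X :=
  Quotient.lift (fun p : G × S => p.1 • (p.2 : X)) <| by
    rintro ⟨g, s⟩ ⟨_, _⟩ ⟨k, rfl, rfl⟩
    change g • (s : X) = (g * (k : G)⁻¹) • (k : G) • (s : X)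
    rw [smul_smul, inv_mul_cancel_right]

theorem actionMap_mk (g : G) (s : S) : actionMap S (mk G K S g s) = g • (s : X) := rfl

theorem actionMap_smul (g : G) (p : TwistedProd G K S) :
    actionMap S (g • p) = g • actionMap S p :=
  Quotient.inductionOn p fun _ => mul_smul _ _ _

theorem continuous_actionMap [TopologicalSpace G] [TopologicalSpace X] [ContinuousSMul G X] :
    Continuous (actionMap S) :=
  continuous_quot_lift _ <| continuous_fst.smul (continuous_subtype_val.comp continuous_snd)

end ActionMap

end TwistedProd

section GlobalSlice

open TwistedProd

variable {G : Type u} [Group G] {H : Subgroup G} {X : Type*} [MulAction G X]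
  {S : SubMulAction H X} {f : X → G ⧸ H}
  (hfequiv : ∀ (g : G) (y : X), f (g • y) = g • f y)
  (hfS : (S : Set X) = f ⁻¹' {QuotientGroup.mk (1 : G)})
include hfequiv hfS

theorem map_smul_of_mem_slice (g : G) {s : X} (hs : s ∈ S) : f (g • s) = g := by
  rw [hfequiv, show f s = QuotientGroup.mk 1 from hfS.le hs, MulAction.Quotient.smul_mk,
    smul_eq_mul, mul_one]

theorem inv_smul_mem_slice {g : G} {y : X} (hg : (g : G ⧸ H) = f y) : g⁻¹ • y ∈ S := by
  rw [← SetLike.mem_coe, hfS, Set.mem_preimage, hfequiv, ← hg, MulAction.Quotient.smul_mk,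
    smul_eq_mul, inv_mul_cancel, Set.mem_singleton_iff]

theorem actionMap_injective_of_slice : Injective (actionMap S) := by
  rintro ⟨g, s⟩ ⟨g', s'⟩ (h : g • (s : X) = g' • (s' : X))
  have hk : g'⁻¹ * g ∈ H := by
    rw [← QuotientGroup.eq, ← map_smul_of_mem_slice hfequiv hfS g s.2,
      ← map_smul_of_mem_slice hfequiv hfS g' s'.2, h]
  refine (mk_eq_mk_mul_inv_smul g ⟨_, hk⟩ s).trans (congrArg₂ (mk G H S) (by group) ?_)
  ext
  change (g'⁻¹ * g) • (s : X) = s'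
  rw [mul_smul, h, inv_smul_smul]

def sliceCoord (p : (QuotientGroup.mk : G → G ⧸ H).Pullback f) : TwistedProd G H S :=
  mk G H S p.fst ⟨p.fst⁻¹ • p.snd, inv_smul_mem_slice hfequiv hfS p.2⟩

theorem actionMap_sliceCoord (p : (QuotientGroup.mk : G → G ⧸ H).Pullback f) :
    actionMap S (sliceCoord hfequiv hfS p) = p.snd :=
  smul_inv_smul _ _

theorem continuous_sliceCoord [TopologicalSpace G] [IsTopologicalGroup G] [TopologicalSpace X]
    [ContinuousSMul G X] : Continuous (sliceCoord hfequiv hfS) := by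
  have hfst : Continuous fun p : (QuotientGroup.mk : G → G ⧸ H).Pullback f => p.fst :=
    continuous_fst.comp continuous_subtype_val
  have hsnd : Continuous fun p : (QuotientGroup.mk : G → G ⧸ H).Pullback f => p.snd :=
    continuous_snd.comp continuous_subtype_val
  exact continuous_mk.comp <| hfst.prodMk <| (hfst.inv.smul hsnd).subtype_mk _

noncomputable def sliceHomeomorph [TopologicalSpace G] [IsTopologicalGroup G]
    [TopologicalSpace X] [ContinuousSMul G X] (hf : Continuous f) : TwistedProd G H S ≃ₜ X :=
  have hsnd : IsQuotientMap (Pullback.snd : (QuotientGroup.mk : G → G ⧸ H).Pullback f → X) :=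
    (QuotientGroup.isOpenMap_coe.pullback_snd hf).isQuotientMap
      (continuous_snd.comp continuous_subtype_val)
      (Pullback.snd_surjective QuotientGroup.mk_surjective)
  have hsurj : Surjective (actionMap S) := fun y => by
    obtain ⟨p, rfl⟩ := hsnd.surjective y
    exact ⟨_, actionMap_sliceCoord hfequiv hfS p⟩
  let e := Equiv.ofBijective (actionMap S) ⟨actionMap_injective_of_slice hfequiv hfS, hsurj⟩
  { toEquiv := e
    continuous_toFun := continuous_actionMap S
    continuous_invFun := hsnd.continuous_iff.mpr <| by
      convert continuous_sliceCoord hfequiv hfS using 1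
      funext p
      exact e.symm_apply_eq.mpr (actionMap_sliceCoord hfequiv hfS p).symm }

end GlobalSlice

theorem twistedProd_globalSlice_homeomorph_general
    (G : Type u) [Group G] [TopologicalSpace G] [IsTopologicalGroup G]
    (H : Subgroup G)
    (X : Type u) [TopologicalSpace X] [MulAction G X] [ContinuousSMul G X]
    (S : SubMulAction H X)
    (f : X → G ⧸ H) (hf : Continuous f)
    (hfequiv : ∀ (g : G) (y : X), f (g • y) = g • f y)
    (hfS : (S : Set X) = f ⁻¹' {QuotientGroup.mk (1 : G)}) :
    ∃ ξ : TwistedProd G H S ≃ₜ X,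
      (∀ (g : G) (s : S), ξ (TwistedProd.mk G H S g s) = g • (s : X)) ∧
      (∀ (g : G) (p : TwistedProd G H S), ξ (g • p) = g • ξ p) := by
  exact ⟨sliceHomeomorph hfequiv hfS hf, TwistedProd.actionMap_mk S,
    TwistedProd.actionMap_smul S⟩

/-- **The tube lemma for global slices.** Let `G` be a locally compact Hausdorff group, `H` a
compact subgroup, `X` a Palais-proper `G`-space and `S` an `H`-invariant subset which is a
global `H`-slice of `X` (i.e. `G(S) = X` and there is a continuous `G`-equivariant
`f : X → G/H` with `S = f⁻¹(eH)`).  Then `ξ : G ×_H S → X`, `ξ [g, s] = g • s`, is a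
`G`-equivariant homeomorphism. -/
theorem twistedProd_globalSlice_homeomorph
    (G : Type u) [Group G] [TopologicalSpace G] [IsTopologicalGroup G]
    [LocallyCompactSpace G] [T2Space G]
    (H : Subgroup G) (hH : IsCompact (H : Set G))
    (X : Type u) [TopologicalSpace X] [MulAction G X] [ContinuousSMul G X]
    (hproper : PalaisProper G X)
    (S : SubMulAction H X)
    (hglobal : ∀ y : X, ∃ g : G, ∃ s ∈ (S : Set X), g • s = y)
    (f : X → G ⧸ H) (hf : Continuous f)
    (hfequiv : ∀ (g : G) (y : X), f (g • y) = g • f y)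
    (hfS : (S : Set X) = f ⁻¹' {QuotientGroup.mk (1 : G)}) :
    ∃ ξ : TwistedProd G H S ≃ₜ X,
      (∀ (g : G) (s : S), ξ (TwistedProd.mk G H S g s) = g • (s : X)) ∧
      (∀ (g : G) (p : TwistedProd G H S), ξ (g • p) = g • ξ p) :=
  twistedProd_globalSlice_homeomorph_general G H X S f hf hfequiv hfS
end

section
/- Let G be a locally compact Hausdorff topological group, H a closed normal subgroup of G, K a compact subgroup of G, and S a K-space. Then the H-orbit space (G ×_K S)/H of the twisted product G ×_K S is G/H-homeomorphic to the twisted product G/H ×_K S; explicitly, the map sending the H-orbit of [g,s] ∈ G ×_K S to [gH, s] ∈ G/H ×_K S is a well-defined homeomorphism which is equivariant with respect to the G/H-actions on both sides. -/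
universe u v

section TwistedProductQuotient

variable (G : Type u) [Group G] [TopologicalSpace G] (H : Subgroup G) [H.Normal]
  (K : Subgroup G) (S : Type v) [TopologicalSpace S] [MulAction K S]

/-- The orbit equivalence relation of the `K`-action `k • (gH, s) = (g k⁻¹ H, k • s)`
on `(G/H) × S`. -/
def twistSetoidQ : Setoid ((G ⧸ H) × S) where
  r p q := ∃ k : K, q.1 = p.1 * (QuotientGroup.mk (k : G))⁻¹ ∧ q.2 = k • p.2
  iseqv := by
    refine ⟨fun p => ⟨1, by simp⟩, ?_, ?_⟩
    · rintro p q ⟨k, h1, h2⟩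
      refine ⟨k⁻¹, by simp [h1, mul_assoc], by simp [h2]⟩
    · rintro p q r ⟨k, h1, h2⟩ ⟨l, h3, h4⟩
      refine ⟨l * k, by simp [h3, h1, mul_assoc], by simp [h4, h2, mul_smul]⟩

/-- The twisted product `(G/H) ×_K S`: the orbit space of the `K`-action
`k • (gH, s) = (g k⁻¹ H, k • s)` on `(G/H) × S`, with the quotient topology. -/
def TwistedProdQ : Type (max u v) := Quotient (twistSetoidQ G H K S)

instance : TopologicalSpace (TwistedProdQ G H K S) := instTopologicalSpaceQuotient

/-- `[gH, s]`, the `K`-orbit of `(gH, s)` in the twisted product `(G/H) ×_K S`. -/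
def TwistedProdQ.mk (c : G ⧸ H) (s : S) : TwistedProdQ G H K S :=
  Quotient.mk (twistSetoidQ G H K S) (c, s)

/-- The natural `G/H`-action on `(G/H) ×_K S`, given by `g'H • [gH, s] = [g'gH, s]`. -/
instance TwistedProdQ.instMulAction : MulAction (G ⧸ H) (TwistedProdQ G H K S) where
  smul c' := Quotient.map (fun p => (c' * p.1, p.2))
    (by rintro p q ⟨k, h1, h2⟩; exact ⟨k, by simp [h1, mul_assoc], h2⟩)
  one_smul x := Quotient.inductionOn x fun p => by
    show Quotient.mk _ (1 * p.1, p.2) = Quotient.mk _ p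
    simp
  mul_smul c₁ c₂ x := Quotient.inductionOn x fun p => by
    show Quotient.mk _ (c₁ * c₂ * p.1, p.2) = Quotient.mk _ (c₁ * (c₂ * p.1), p.2)
    rw [mul_assoc]

end TwistedProductQuotient

variable {G : Type u} [Group G] {X : Type u} [MulAction G X]

/-- For a normal subgroup `H ≤ G`, the natural `G/H`-action on the `H`-orbit space `X/H`,
given by `(gH) • H(x) = H(g • x)`. -/
instance quotientOrbitMulAction (H : Subgroup G) [H.Normal] :
    MulAction (G ⧸ H) (Quotient (MulAction.orbitRel H X)) where
  smul c x := Quotient.liftOn₂ c x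
    (fun g y => Quotient.mk (MulAction.orbitRel H X) (g • y))
    (by
      intro g₁ y₁ g₂ y₂ hg hy
      have hg' : g₁⁻¹ * g₂ ∈ H := QuotientGroup.leftRel_apply.mp hg
      have hy' : y₁ ∈ MulAction.orbit H y₂ := MulAction.orbitRel_apply.mp hy
      obtain ⟨h, hh⟩ := hy'
      apply Quotient.sound
      refine MulAction.orbitRel_apply.mpr ⟨⟨g₁ * (h : G) * g₂⁻¹, ?_⟩, ?_⟩
      · have : g₁ * (h : G) * g₂⁻¹ = g₁ * ((h : G) * (g₁⁻¹ * g₂)⁻¹) * g₁⁻¹ := by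
          group
        rw [this]
        exact (Subgroup.Normal.conj_mem ‹H.Normal› _ (H.mul_mem h.2 (H.inv_mem hg')) g₁)
      · show (g₁ * (h : G) * g₂⁻¹) • (g₂ • y₂) = g₁ • y₁
        have hhy : (h : G) • y₂ = y₁ := hh
        rw [← hhy]
        rw [smul_smul, smul_smul]
        congr 1
        group)
  one_smul x := by
    refine Quotient.inductionOn x (fun y => ?_)
    show Quotient.mk _ ((1 : G) • y) = _
    rw [one_smul]
  mul_smul c₁ c₂ x := by
    refine QuotientGroup.induction_on c₁ (fun g₁ => ?_)
    refine QuotientGroup.induction_on c₂ (fun g₂ => ?_)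
    refine Quotient.inductionOn x (fun y => ?_)
    show Quotient.mk _ ((g₁ * g₂) • y) = Quotient.mk _ (g₁ • g₂ • y)
    rw [mul_smul]

/-! Both `(g, s) ↦ H[g, s]` and `(g, s) ↦ [gH, s]` are quotient maps out of `G × S` (the second
because `G → G/H` is open, so its product with the identity is still a quotient map), and they
have the same fibres: as `H` is normal, `H g k⁻¹ = g k⁻¹ H`, so each of them identifies `(g, s)`
with `(g', k • s)` exactly when `g' ∈ g k⁻¹ H` for some `k ∈ K`. Two quotient maps with the same
fibres induce a homeomorphism of their targets, and this one visibly commutes with left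
multiplication on the `G` factor. -/

open Function Topology

theorem QuotientGroup.mk_eq_mk_iff_exists_mul {G : Type*} [Group G] {N : Subgroup G} [N.Normal]
    {x y : G} : (x : G ⧸ N) = y ↔ ∃ n : N, x = n * y := by
  rw [QuotientGroup.eq_iff_div_mem]
  refine ⟨fun h => ⟨⟨_, h⟩, (div_mul_cancel x y).symm⟩, ?_⟩
  rintro ⟨n, rfl⟩
  simp

namespace Topology.IsQuotientMap

variable {X Y Z : Type*} [TopologicalSpace X] [TopologicalSpace Y] [TopologicalSpace Z]
  {f : X → Y} {g : X → Z}

noncomputable def homeomorphOfFiberEq (hf : IsQuotientMap f) (hg : IsQuotientMap g)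
    (hfg : ∀ a b, f a = f b ↔ g a = g b) : Y ≃ₜ Z where
  toFun y := g (surjInv hf.surjective y)
  invFun z := f (surjInv hg.surjective z)
  left_inv y := by
    dsimp only
    rw [(hfg _ _).2 (surjInv_eq hg.surjective _)]
    exact surjInv_eq hf.surjective y
  right_inv z := by
    dsimp only
    rw [(hfg _ _).1 (surjInv_eq hf.surjective _)]
    exact surjInv_eq hg.surjective z
  continuous_toFun := hf.continuous_iff.2 <| hg.continuous.congr fun a =>
    ((hfg _ _).1 (surjInv_eq hf.surjective (f a))).symm
  continuous_invFun := hg.continuous_iff.2 <| hf.continuous.congr fun a =>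
    ((hfg _ _).2 (surjInv_eq hg.surjective (g a))).symm

theorem homeomorphOfFiberEq_apply (hf : IsQuotientMap f) (hg : IsQuotientMap g)
    (hfg : ∀ a b, f a = f b ↔ g a = g b) (a : X) : homeomorphOfFiberEq hf hg hfg (f a) = g a :=
  (hfg _ _).1 (surjInv_eq hf.surjective (f a))

end Topology.IsQuotientMap

section OrbitMk

variable (G : Type u) [Group G] (H : Subgroup G) (K : Subgroup G) (S : Type v) [MulAction K S]

theorem TwistedProd.mk_eq_mk_iff {g g' : G} {s s' : S} :
    TwistedProd.mk G K S g s = TwistedProd.mk G K S g' s' ↔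
      ∃ k : K, g' = g * (k : G)⁻¹ ∧ s' = k • s :=
  Quotient.eq

theorem TwistedProd.smul_mk_s9 (g' g : G) (s : S) :
    g' • TwistedProd.mk G K S g s = TwistedProd.mk G K S (g' * g) s :=
  rfl

def TwistedProd.orbitMk (p : G × S) : Quotient (MulAction.orbitRel H (TwistedProd G K S)) :=
  Quotient.mk _ (TwistedProd.mk G K S p.1 p.2)

def TwistedProdQ.cosetMk [H.Normal] (p : G × S) : TwistedProdQ G H K S :=
  TwistedProdQ.mk G H K S p.1 p.2

theorem TwistedProd.isQuotientMap_orbitMk [TopologicalSpace G] [TopologicalSpace S] :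
    IsQuotientMap (TwistedProd.orbitMk G H K S) :=
  isQuotientMap_quot_mk.comp isQuotientMap_quot_mk

theorem TwistedProdQ.isQuotientMap_cosetMk [TopologicalSpace G] [SeparatelyContinuousMul G]
    [H.Normal] [TopologicalSpace S] : IsQuotientMap (TwistedProdQ.cosetMk G H K S) :=
  isQuotientMap_quot_mk.comp
    (QuotientGroup.isOpenQuotientMap_mk.prodMap IsOpenQuotientMap.id).isQuotientMap

theorem TwistedProdQ.cosetMk_eq_cosetMk_iff [H.Normal] {p q : G × S} :
    TwistedProdQ.cosetMk G H K S p = TwistedProdQ.cosetMk G H K S q ↔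
      ∃ k : K, (q.1 : G ⧸ H) = (p.1 * (k : G)⁻¹ : G) ∧ q.2 = k • p.2 := by
  simp only [QuotientGroup.mk_mul, QuotientGroup.mk_inv]
  exact Quotient.eq

theorem TwistedProd.orbitMk_eq_orbitMk_iff [H.Normal] {p q : G × S} :
    TwistedProd.orbitMk G H K S p = TwistedProd.orbitMk G H K S q ↔
      ∃ k : K, (q.1 : G ⧸ H) = (p.1 * (k : G)⁻¹ : G) ∧ q.2 = k • p.2 := by
  rw [TwistedProd.orbitMk, TwistedProd.orbitMk, eq_comm, Quotient.eq, MulAction.orbitRel_apply]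
  simp only [MulAction.mem_orbit_iff, Subgroup.smul_def, TwistedProd.smul_mk_s9,
    TwistedProd.mk_eq_mk_iff, QuotientGroup.mk_eq_mk_iff_exists_mul, mul_assoc]
  rw [exists_comm]
  simp only [exists_and_right]

theorem TwistedProdQ.cosetMk_mul [H.Normal] (g : G) (p : G × S) :
    TwistedProdQ.cosetMk G H K S (g * p.1, p.2) = (g : G ⧸ H) • TwistedProdQ.cosetMk G H K S p :=
  rfl

end OrbitMk

theorem TwistedProd.orbitMk_mul {G : Type u} [Group G] (H : Subgroup G) [H.Normal]
    (K : Subgroup G) {S : Type u} [MulAction K S] (g : G) (p : G × S) :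
    TwistedProd.orbitMk G H K S (g * p.1, p.2) = (g : G ⧸ H) • TwistedProd.orbitMk G H K S p :=
  rfl

theorem orbitSpace_twistedProd_homeomorph_twistedProdQ_general
    (G : Type u) [Group G] [TopologicalSpace G] [IsTopologicalGroup G]
    (H : Subgroup G) [H.Normal]
    (K : Subgroup G)
    (S : Type u) [TopologicalSpace S] [MulAction K S] :
    ∃ φ : Quotient (MulAction.orbitRel H (TwistedProd G K S)) ≃ₜ TwistedProdQ G H K S,
      (∀ (g : G) (s : S),
        φ (Quotient.mk _ (TwistedProd.mk G K S g s)) =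
          TwistedProdQ.mk G H K S (QuotientGroup.mk g) s) ∧
      (∀ (c : G ⧸ H) (p : Quotient (MulAction.orbitRel H (TwistedProd G K S))),
        φ (c • p) = c • φ p) := by
  have hOrbit := TwistedProd.isQuotientMap_orbitMk G H K S
  have hCoset := TwistedProdQ.isQuotientMap_cosetMk G H K S
  have hFibers (p q : G × S) : TwistedProd.orbitMk G H K S p = TwistedProd.orbitMk G H K S q ↔
      TwistedProdQ.cosetMk G H K S p = TwistedProdQ.cosetMk G H K S q :=
    (TwistedProd.orbitMk_eq_orbitMk_iff G H K S).trans
      (TwistedProdQ.cosetMk_eq_cosetMk_iff G H K S).symm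
  let φ := hOrbit.homeomorphOfFiberEq hCoset hFibers
  have hφ (p : G × S) : φ (TwistedProd.orbitMk G H K S p) = TwistedProdQ.cosetMk G H K S p :=
    hOrbit.homeomorphOfFiberEq_apply hCoset hFibers p
  refine ⟨φ, fun g s => hφ (g, s), fun c x => ?_⟩
  obtain ⟨g, rfl⟩ := QuotientGroup.mk_surjective c
  obtain ⟨p, rfl⟩ := hOrbit.surjective x
  rw [← TwistedProd.orbitMk_mul, hφ, hφ, TwistedProdQ.cosetMk_mul]

/-- For a locally compact Hausdorff group `G`, a closed normal subgroup `H`, a compact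
subgroup `K` and a `K`-space `S`, the `H`-orbit space `(G ×_K S)/H` is `G/H`-equivariantly
homeomorphic to the twisted product `(G/H) ×_K S`, via the map sending the `H`-orbit of
`[g, s]` to `[gH, s]`. -/
theorem orbitSpace_twistedProd_homeomorph_twistedProdQ
    (G : Type u) [Group G] [TopologicalSpace G] [IsTopologicalGroup G]
    [LocallyCompactSpace G] [T2Space G]
    (H : Subgroup G) (hHclosed : IsClosed (H : Set G)) [H.Normal]
    (K : Subgroup G) (hK : IsCompact (K : Set G))
    (S : Type u) [TopologicalSpace S] [MulAction K S] [ContinuousSMul K S] :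
    ∃ φ : Quotient (MulAction.orbitRel H (TwistedProd G K S)) ≃ₜ TwistedProdQ G H K S,
      (∀ (g : G) (s : S),
        φ (Quotient.mk _ (TwistedProd.mk G K S g s)) =
          TwistedProdQ.mk G H K S (QuotientGroup.mk g) s) ∧
      (∀ (c : G ⧸ H) (p : Quotient (MulAction.orbitRel H (TwistedProd G K S))),
        φ (c • p) = c • φ p) :=
  orbitSpace_twistedProd_homeomorph_twistedProdQ_general G H K S
end
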